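/- Let m be a positive integer and c a nonnegative integer. If the odd density δ_m of the m-multipartition function exists (i.e., the limit as x → ∞ of #{n ≤ x : p_m(n) is odd}/x exists), then the odd density δ_{2^c · m} of the (2^c·m)-multipartition function also exists and δ_{2^c · m} = δ_m / 2^c. -/

import Mathlib

open Filter PowerSeries Finset

/-- Number of `t`-tuples of partitions with total size `n`, i.e. the
`t`-multipartition function `p_t(n)`. -/
def multipartition (t n : ℕ) : ℕ :=
  ∑ v ∈ Finset.Nat.antidiagonalTuple t n, ∏ i, Fintype.card (Nat.Partition (v i))

/-- Number of `n ≤ x` with `multipartition t n` odd. -/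
def oddCount (t x : ℕ) : ℕ :=
  ((Finset.range (x + 1)).filter (fun n => Odd (multipartition t n))).card

/-- The odd density of the `t`-multipartition function exists and equals `δ`. -/
def hasOddDensity (t : ℕ) (δ : ℝ) : Prop :=
  Tendsto (fun x : ℕ => (oddCount t x : ℝ) / x) atTop (nhds δ)

/-- Sum over antidiagonalTuple equals coefficient of a power. -/
lemma sum_adt_eq_coeff_pow (f : ℕ → ZMod 2) (t n : ℕ) :
    ∑ v ∈ Finset.Nat.antidiagonalTuple t n, ∏ i, f (v i)
      = PowerSeries.coeff n ((PowerSeries.mk f) ^ t) := by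
  induction t generalizing n with
  | zero =>
    rcases Nat.eq_zero_or_pos n with rfl | hn
    · simp [Finset.Nat.antidiagonalTuple_zero_zero]
    · rw [pow_zero, PowerSeries.coeff_one]
      obtain ⟨k, rfl⟩ := Nat.exists_eq_succ_of_ne_zero hn.ne'
      simp [Finset.Nat.antidiagonalTuple_zero_succ]
  | succ t ih =>
    rw [pow_succ', PowerSeries.coeff_mul]
    have : ∀ p ∈ Finset.HasAntidiagonal.antidiagonal n,
        (PowerSeries.coeff p.1 (PowerSeries.mk f)) *
          (PowerSeries.coeff p.2 ((PowerSeries.mk f) ^ t))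
        = ∑ w ∈ Finset.Nat.antidiagonalTuple t p.2, f p.1 * ∏ i, f (w i) := by
      intro p _
      rw [← ih, PowerSeries.coeff_mk, Finset.mul_sum]
    rw [Finset.sum_congr rfl this, Finset.sum_sigma']
    refine Finset.sum_bij'
      (fun v _ => (⟨(v 0, ∑ i : Fin t, v i.succ), Fin.tail v⟩ : (_ : ℕ × ℕ) × (Fin t → ℕ)))
      (fun x _ => Fin.cons x.1.1 x.2) ?_ ?_ ?_ ?_ ?_
    · intro v hv
      rw [Finset.Nat.mem_antidiagonalTuple] at hv
      simp only [Finset.mem_sigma, Finset.HasAntidiagonal.mem_antidiagonal,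
        Finset.Nat.mem_antidiagonalTuple]
      exact ⟨by rw [← hv, Fin.sum_univ_succ], rfl⟩
    · rintro ⟨⟨a, b⟩, w⟩ hx
      simp only [Finset.mem_sigma, Finset.HasAntidiagonal.mem_antidiagonal,
        Finset.Nat.mem_antidiagonalTuple] at hx
      rw [Finset.Nat.mem_antidiagonalTuple, Fin.sum_univ_succ]
      simp only [Fin.cons_zero, Fin.cons_succ]
      rw [hx.2, hx.1]
    · intro v hv
      exact Fin.cons_self_tail v
    · rintro ⟨⟨a, b⟩, w⟩ hx
      simp only [Finset.mem_sigma, Finset.HasAntidiagonal.mem_antidiagonal,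
        Finset.Nat.mem_antidiagonalTuple] at hx
      simp only [Fin.cons_zero, Fin.tail_cons, Sigma.mk.inj_iff, Prod.mk.injEq, heq_eq_eq,
        true_and, and_true]
      simp [Fin.cons_succ, hx.2]
    · intro v hv
      simp only [Fin.cons_zero, Fin.tail_cons]
      rw [Fin.prod_univ_succ]
      rfl

lemma zmod2_mul_self (x : ZMod 2) : x * x = x := by revert x; decide

lemma sum_antidiagonal_char2 (f : ℕ → ZMod 2) (n : ℕ) :
    ∑ p ∈ Finset.HasAntidiagonal.antidiagonal n, f p.1 * f p.2 = if 2 ∣ n then f (n / 2) else 0 := by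
  classical
  rw [← Finset.sum_filter_add_sum_filter_not (Finset.HasAntidiagonal.antidiagonal n) (fun p => p.1 = p.2)]
  have h2 : ∑ p ∈ (Finset.HasAntidiagonal.antidiagonal n).filter (fun p => ¬ p.1 = p.2), f p.1 * f p.2 = 0 := by
    refine Finset.sum_involution (fun p _ => p.swap) ?_ ?_ ?_ ?_
    · intro p _
      have : f p.swap.1 * f p.swap.2 = f p.1 * f p.2 := by
        simp [mul_comm]
      rw [this]
      have : f p.1 * f p.2 + f p.1 * f p.2 = 2 * (f p.1 * f p.2) := by ring
      rw [this]
      simp [show (2 : ZMod 2) = 0 from rfl]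
    · intro p hp _
      simp only [Finset.mem_filter] at hp
      intro hc
      apply hp.2
      have := congrArg Prod.fst hc
      simp at this
      omega
    · intro p hp
      simp only [Finset.mem_filter, Finset.HasAntidiagonal.mem_antidiagonal] at hp ⊢
      constructor
      · simp only [Prod.fst_swap, Prod.snd_swap]; omega
      · simp only [Prod.fst_swap, Prod.snd_swap]
        exact fun h => hp.2 h.symm
    · intro p _
      simp
  rw [h2, add_zero]
  have hdiag : (Finset.HasAntidiagonal.antidiagonal n).filter (fun p : ℕ × ℕ => p.1 = p.2)
      = if 2 ∣ n then {(n / 2, n / 2)} else ∅ := by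
    ext ⟨a, b⟩
    simp only [Finset.mem_filter, Finset.HasAntidiagonal.mem_antidiagonal]
    split <;> rename_i h <;> simp only [Finset.mem_singleton, Finset.notMem_empty,
      Prod.mk.injEq, iff_false]
    · constructor
      · rintro ⟨h1, rfl⟩; omega
      · rintro ⟨rfl, rfl⟩; omega
    · rintro ⟨h1, rfl⟩; omega
  rw [hdiag]
  split
  · rw [Finset.sum_singleton, zmod2_mul_self]
  · simp

/-- Key congruence: `p_{2t}(n) ≡ p_t(n/2)` if `n` even, else even. -/
lemma multipartition_two_mul_cast (t n : ℕ) :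
    ((multipartition (2 * t) n : ZMod 2))
      = if 2 ∣ n then (multipartition t (n / 2) : ZMod 2) else 0 := by
  have key : ∀ s k : ℕ, ((multipartition s k : ZMod 2))
      = PowerSeries.coeff k
          ((PowerSeries.mk (fun j => ((Fintype.card (Nat.Partition j) : ZMod 2)))) ^ s) := by
    intro s k
    rw [← sum_adt_eq_coeff_pow]
    unfold multipartition
    push_cast
    rfl
  rw [key, two_mul, pow_add, PowerSeries.coeff_mul]
  have : ∀ p ∈ Finset.HasAntidiagonal.antidiagonal n,
      PowerSeries.coeff p.1
          ((PowerSeries.mk (fun j => ((Fintype.card (Nat.Partition j) : ZMod 2)))) ^ t) *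
        PowerSeries.coeff p.2
          ((PowerSeries.mk (fun j => ((Fintype.card (Nat.Partition j) : ZMod 2)))) ^ t)
      = (fun k => (multipartition t k : ZMod 2)) p.1 * (fun k => (multipartition t k : ZMod 2)) p.2 := by
    intro p _
    simp only [← key]
  rw [Finset.sum_congr rfl this,
    sum_antidiagonal_char2 (fun k => ((multipartition t k : ZMod 2)))]

lemma odd_iff_zmod (k : ℕ) : Odd k ↔ (k : ZMod 2) = 1 := by
  rw [Nat.odd_iff, ← ZMod.natCast_mod k 2]
  rcases Nat.mod_two_eq_zero_or_one k with h | h <;> rw [h] <;> simp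

lemma odd_multipartition_two_mul (t n : ℕ) :
    Odd (multipartition (2 * t) n) ↔ 2 ∣ n ∧ Odd (multipartition t (n / 2)) := by
  rw [odd_iff_zmod, multipartition_two_mul_cast, odd_iff_zmod]
  split <;> rename_i h <;> simp [h]

lemma oddCount_two_mul (t x : ℕ) : oddCount (2 * t) x = oddCount t (x / 2) := by
  unfold oddCount
  classical
  have hfil : (Finset.range (x + 1)).filter (fun n => Odd (multipartition (2 * t) n))
      = (Finset.range (x + 1)).filter (fun n => 2 ∣ n ∧ Odd (multipartition t (n / 2))) :=
    Finset.filter_congr fun n _ => odd_multipartition_two_mul t n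
  rw [hfil]
  refine Finset.card_bij' (fun n _ => n / 2) (fun k _ => 2 * k) ?_ ?_ ?_ ?_
  · intro n hn
    simp only [Finset.mem_filter, Finset.mem_range] at hn ⊢
    exact ⟨by omega, hn.2.2⟩
  · intro k hk
    simp only [Finset.mem_filter, Finset.mem_range] at hk ⊢
    refine ⟨by omega, ⟨k, rfl⟩, by simpa using hk.2⟩
  · intro n hn
    simp only [Finset.mem_filter, Finset.mem_range] at hn
    obtain ⟨-, ⟨j, rfl⟩, -⟩ := hn
    omega
  · intro k _
    omega

lemma halfFloor_div_tendsto :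
    Tendsto (fun x : ℕ => ((x / 2 : ℕ) : ℝ) / (x : ℝ)) atTop (nhds (1 / 2)) := by
  have hlow : Tendsto (fun x : ℕ => 1 / 2 - 1 / (x : ℝ)) atTop (nhds (1 / 2)) := by
    have := tendsto_const_nhds (x := (1 / 2 : ℝ)) (f := atTop (α := ℕ))
    simpa using this.sub tendsto_one_div_atTop_nhds_zero_nat
  have hup : Tendsto (fun _ : ℕ => (1 / 2 : ℝ)) atTop (nhds (1 / 2)) := tendsto_const_nhds
  refine tendsto_of_tendsto_of_tendsto_of_le_of_le' hlow hup ?_ ?_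
  · filter_upwards [eventually_ge_atTop 1] with x hx
    have hx0 : (0 : ℝ) < (x : ℝ) := by exact_mod_cast hx
    rw [le_div_iff₀ hx0]
    have hcast : (x : ℝ) ≤ 2 * ((x / 2 : ℕ) : ℝ) + 1 := by
      have : x ≤ 2 * (x / 2) + 1 := by omega
      exact_mod_cast this
    have h1x : 1 / (x : ℝ) * (x : ℝ) = 1 := by field_simp
    nlinarith [h1x]
  · filter_upwards [eventually_ge_atTop 1] with x hx
    have hx0 : (0 : ℝ) < (x : ℝ) := by exact_mod_cast hx
    rw [div_le_iff₀ hx0]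
    have hcast : 2 * ((x / 2 : ℕ) : ℝ) ≤ (x : ℝ) := by
      have : 2 * (x / 2) ≤ x := by omega
      exact_mod_cast this
    linarith

lemma hasOddDensity_two_mul (t : ℕ) (δ : ℝ) (h : hasOddDensity t δ) :
    hasOddDensity (2 * t) (δ / 2) := by
  unfold hasOddDensity at h ⊢
  simp only [oddCount_two_mul]
  have hdiv : Tendsto (fun x : ℕ => x / 2) atTop atTop := by
    refine tendsto_atTop_atTop.mpr fun b => ⟨2 * b, fun x hx => by omega⟩
  have h1 : Tendsto (fun x : ℕ => (oddCount t (x / 2) : ℝ) / ((x / 2 : ℕ) : ℝ))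
      atTop (nhds δ) := h.comp hdiv
  have h2 := h1.mul halfFloor_div_tendsto
  have heq : δ * (1 / 2) = δ / 2 := by ring
  rw [heq] at h2
  refine h2.congr' ?_
  filter_upwards [eventually_ge_atTop 2] with x hx
  have hne : ((x / 2 : ℕ) : ℝ) ≠ 0 := by
    have : 1 ≤ x / 2 := by omega
    positivity
  field_simp

/-- If `δ_m` exists then `δ_{2^c·m}` exists and equals `δ_m / 2^c`. -/
theorem hasOddDensity_two_pow_mul (m : ℕ) (hm : 0 < m) (c : ℕ) (δ : ℝ)
    (h : hasOddDensity m δ) :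
    hasOddDensity (2 ^ c * m) (δ / 2 ^ c) := by
  induction c with
  | zero => simpa using h
  | succ c ih =>
    have := hasOddDensity_two_mul (2 ^ c * m) (δ / 2 ^ c) ih
    have h1 : 2 * (2 ^ c * m) = 2 ^ (c + 1) * m := by ring
    have h2 : δ / 2 ^ c / 2 = δ / 2 ^ (c + 1) := by
      rw [div_div, ← pow_succ]
    rwa [h1, h2] at this
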